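/- Let α ⊨ n, let E be an equivalence class of SRCT(α) under ∼_α, let τ_sink be a sink tableau in E, and let M be the largest element of DRN(α,E). Then the distinguished removable node in column M of τ_sink contains the entry 1. -/

import Mathlib

/-- Cell `(r,c)` (0-indexed: row `r` from the top, column `c` from the left) of the
reverse composition diagram of the composition `α`. -/
def IsCell (α : List ℕ) (r c : ℕ) : Prop := r < α.length ∧ c < α.getD r 0

instance (α : List ℕ) (r c : ℕ) : Decidable (IsCell α r c) :=
  inferInstanceAs (Decidable (r < α.length ∧ c < α.getD r 0))

/-- A standard reverse composition tableau (SRCT) of shape `α`: a bijective filling of the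
reverse composition diagram of `α` by `{1,…,α.sum}` (with the junk value `0` off the diagram)
whose rows decrease from left to right, whose first column increases from top to bottom,
and which satisfies the triple rule. -/
structure SRCT (α : List ℕ) where
  entry : ℕ → ℕ → ℕ
  zero_off : ∀ r c, ¬ IsCell α r c → entry r c = 0
  one_le : ∀ r c, IsCell α r c → 1 ≤ entry r c
  le_sum : ∀ r c, IsCell α r c → entry r c ≤ α.sum
  inj : ∀ r c r' c', IsCell α r c → IsCell α r' c' → entry r c = entry r' c' → r = r' ∧ c = c'
  surj : ∀ m, 1 ≤ m → m ≤ α.sum → ∃ r c, IsCell α r c ∧ entry r c = m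
  row_dec : ∀ r c, IsCell α r (c + 1) → entry r (c + 1) < entry r c
  col1_inc : ∀ r r', r < r' → IsCell α r 0 → IsCell α r' 0 → entry r 0 < entry r' 0
  triple : ∀ r r' c, r < r' → IsCell α r c → IsCell α r' (c + 1) →
    entry r' (c + 1) < entry r c → IsCell α r (c + 1) ∧ entry r' (c + 1) < entry r (c + 1)

/-- `i` is a descent of `T`: `i+1` appears weakly right of `i`. -/
def Descent (α : List ℕ) (T : SRCT α) (i : ℕ) : Prop :=
  ∃ r c r' c', IsCell α r c ∧ IsCell α r' c' ∧
    T.entry r c = i ∧ T.entry r' c' = i + 1 ∧ c ≤ c'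

/-- `i` and `i+1` are attacking in `T`: same column, or adjacent columns with `i+1`
strictly southeast of `i`. -/
def Attacking (α : List ℕ) (T : SRCT α) (i : ℕ) : Prop :=
  ∃ r c r' c', IsCell α r c ∧ IsCell α r' c' ∧
    T.entry r c = i ∧ T.entry r' c' = i + 1 ∧ (c' = c ∨ (c' = c + 1 ∧ r < r'))

/-- The entry function of the filling `s_i(T)` obtained from `T` by interchanging the
positions of the entries `i` and `i+1`. -/
def swapEntry (α : List ℕ) (T : SRCT α) (i : ℕ) : ℕ → ℕ → ℕ := fun r c =>
  if T.entry r c = i then i + 1 else if T.entry r c = i + 1 then i else T.entry r c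

def maxPart (α : List ℕ) : ℕ := α.foldr max 0

/-- The entries of column `c` of `T`, read from top to bottom. -/
def colList (α : List ℕ) (T : SRCT α) (c : ℕ) : List ℕ :=
  (List.range α.length).filterMap fun r => if IsCell α r c then some (T.entry r c) else none

/-- The column word of `T`: entries of each column read top to bottom, columns left to right,
viewed as a permutation of `{1,…,n}` in one-line notation. -/
def colWord (α : List ℕ) (T : SRCT α) : List ℕ :=
  (List.range (maxPart α)).flatMap fun c => colList α T c

/-- The inversion set of a one-line word: pairs of positions `p < q` with `w_p > w_q`. -/
def invFinset (w : List ℕ) : Finset (ℕ × ℕ) :=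
  (Finset.range w.length ×ˢ Finset.range w.length).filter fun pq =>
    pq.1 < pq.2 ∧ w.getD pq.2 0 < w.getD pq.1 0

/-- The number of inversions, i.e. the Coxeter length of the one-line word. -/
def invCount (w : List ℕ) : ℕ := (invFinset w).card

/-- The standardization of a word with distinct letters, with ranks `1,…,len`. -/
def stdWord (w : List ℕ) : List ℕ :=
  w.map fun x => (w.filter fun y => decide (y ≤ x)).length

/-- The standardized column word of `T`: concatenation over columns (left to right) of the
standardizations of the column reading words (top to bottom). -/
def stWord (α : List ℕ) (T : SRCT α) : List ℕ :=
  (List.range (maxPart α)).flatMap fun c => stdWord (colList α T c)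

/-- The equivalence class of `T0` under `∼_α` (equal standardized column words). -/
def stClass (α : List ℕ) (T0 : SRCT α) : Set (SRCT α) := {T | stWord α T = stWord α T0}

/-- `T` is a source tableau: for every non-descent `i ≠ n`, the entry `i+1` lies in the cell
immediately to the left of the cell containing `i`. -/
def IsSource (α : List ℕ) (T : SRCT α) : Prop :=
  ∀ i, 1 ≤ i → i < α.sum → ¬ Descent α T i →
    ∃ r c, IsCell α r (c + 1) ∧ T.entry r c = i + 1 ∧ T.entry r (c + 1) = i

/-- `T` is a sink tableau: every descent of `T` is an attacking descent. -/
def IsSink (α : List ℕ) (T : SRCT α) : Prop := ∀ i, Descent α T i → Attacking α T i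

/-- The cell `(r,c)` is a removable node of the diagram of `α` (0-indexed): it is the last
cell of row `r`, and either `r` is the top row or no earlier part equals `α_r - 1`
(with `α_r ≥ 2`). -/
def Removable (α : List ℕ) (r c : ℕ) : Prop :=
  IsCell α r c ∧ c + 1 = α.getD r 0 ∧
    (r = 0 ∨ (2 ≤ α.getD r 0 ∧ ∀ i < r, α.getD i 0 ≠ α.getD r 0 - 1))

/-- The cell `(r,c)` of `T` contains the smallest entry in its column. -/
def MinInCol (α : List ℕ) (T : SRCT α) (r c : ℕ) : Prop :=
  ∀ r', IsCell α r' c → T.entry r c ≤ T.entry r' c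

/-- The set of columns containing a distinguished removable node (a removable node holding
the smallest entry of its column); this depends only on the `∼_α`-class of `T`. -/
def DRN (α : List ℕ) (T : SRCT α) : Set ℕ :=
  {c | ∃ r, Removable α r c ∧ MinInCol α T r c}

/-!
The entry `1` of an SRCT lies in a removable node of its column (the triple rule forbids a row of
length `c` above it), or in column `0`; and which cell of a column holds the column minimum depends
only on the standardized column word. Hence the column of `1` in `τ_sink` is at most `M`.
Conversely, in a sink tableau follow `1, 2, …` up to the entry `m` of the distinguished removable
node in column `M`: stepping down from `j + 1` to `j` can only leave the columns `≥ M` through an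
attacking descent into column `M`, which forces `j + 1 = m`; removability then makes the row of `j`
reach column `M`, where its entry is below `m`. So `1` lies weakly right of column `M`.
-/

namespace List

theorem eq_of_flatMap_eq_flatMap {β γ : Type*} {l : List β} {f g : β → List γ}
    (hlen : ∀ b ∈ l, (f b).length = (g b).length) (h : l.flatMap f = l.flatMap g) :
    ∀ b ∈ l, f b = g b := by
  induction l with
  | nil => simp
  | cons a t ih =>
    obtain ⟨hhead, htail⟩ := List.append_inj h (hlen a mem_cons_self)
    rintro b (_ | ⟨_, hb⟩)
    · exact hhead
    · exact ih (fun b hb => hlen b (mem_cons_of_mem a hb)) htail b hb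

theorem length_filter_le_le_length_filter_le_iff {w : List ℕ} {x y : ℕ} (hx : x ∈ w) :
    (w.filter fun z => decide (z ≤ x)).length ≤ (w.filter fun z => decide (z ≤ y)).length ↔
      x ≤ y := by
  refine ⟨fun hlen => ?_, fun hxy => ?_⟩
  · by_contra! hyx
    have hsub : (w.filter fun z => decide (z ≤ y)) =
        (w.filter fun z => decide (z ≤ x)).filter fun z => decide (z ≤ y) := by
      rw [filter_filter]
      refine filter_congr fun z _ => ?_
      by_cases hzy : z ≤ y
      · simp [hzy, hzy.trans hyx.le]
      · simp [hzy]
    have hlt : ((w.filter fun z => decide (z ≤ x)).filter fun z => decide (z ≤ y)).length <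
        (w.filter fun z => decide (z ≤ x)).length :=
      length_filter_lt_length_iff_exists.2 ⟨x, by simpa using hx, by simpa using hyx⟩
    rw [← hsub] at hlt
    omega
  · simp only [← countP_eq_length_filter]
    exact countP_mono_left fun z _ hz => by simp only [decide_eq_true_eq] at hz ⊢; omega

end List

theorem stdWord_map {β : Type*} (l : List β) (f : β → ℕ) :
    stdWord (l.map f) = l.map fun a => ((l.map f).filter fun y => decide (y ≤ f a)).length := by
  simp [stdWord]

theorem le_maxPart {α : List ℕ} {a : ℕ} (h : a ∈ α) : a ≤ maxPart α := by
  induction α with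
  | nil => simp at h
  | cons b t ih =>
    simp only [maxPart, List.foldr_cons] at ih ⊢
    rcases List.mem_cons.1 h with rfl | h
    · exact le_max_left _ _
    · exact (ih h).trans (le_max_right _ _)

theorem IsCell.lt_maxPart {α : List ℕ} {r c : ℕ} (h : IsCell α r c) : c < maxPart α := by
  refine h.2.trans_le (le_maxPart ?_)
  rw [List.getD_eq_getElem α 0 h.1]
  exact List.getElem_mem h.1

def rowsCol (α : List ℕ) (c : ℕ) : List ℕ :=
  (List.range α.length).filter fun r => decide (IsCell α r c)

theorem mem_rowsCol {α : List ℕ} {c r : ℕ} : r ∈ rowsCol α c ↔ IsCell α r c := by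
  simpa [rowsCol] using fun h : IsCell α r c => h.1

theorem colList_eq_map (α : List ℕ) (T : SRCT α) (c : ℕ) :
    colList α T c = (rowsCol α c).map fun r => T.entry r c := by
  unfold colList rowsCol
  induction List.range α.length with
  | nil => rfl
  | cons a t ih => by_cases h : IsCell α a c <;> simp [h, ih]

namespace SRCT

variable {α : List ℕ}

theorem entry_le_entry_iff_of_stWord_eq {T T' : SRCT α} (h : stWord α T = stWord α T')
    {r r' c : ℕ} (hr : IsCell α r c) (hr' : IsCell α r' c) :
    T.entry r c ≤ T.entry r' c ↔ T'.entry r c ≤ T'.entry r' c := by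
  have hcol : stdWord (colList α T c) = stdWord (colList α T' c) :=
    List.eq_of_flatMap_eq_flatMap (by simp [stdWord, colList_eq_map]) h c
      (List.mem_range.2 hr.lt_maxPart)
  simp only [colList_eq_map, stdWord_map, List.map_inj_left] at hcol
  have hmem : ∀ (S : SRCT α) (s : ℕ), IsCell α s c →
      S.entry s c ∈ (rowsCol α c).map fun s => S.entry s c :=
    fun S s hs => List.mem_map_of_mem (mem_rowsCol.2 hs)
  rw [← List.length_filter_le_le_length_filter_le_iff (hmem T r hr),
    ← List.length_filter_le_le_length_filter_le_iff (hmem T' r hr),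
    hcol r (mem_rowsCol.2 hr), hcol r' (mem_rowsCol.2 hr')]

theorem minInCol_of_stWord_eq {T T' : SRCT α} (h : stWord α T = stWord α T') {r c : ℕ}
    (hcell : IsCell α r c) (hmin : MinInCol α T r c) : MinInCol α T' r c :=
  fun r' hr' => (entry_le_entry_iff_of_stWord_eq h hcell hr').1 (hmin r' hr')

theorem removable_of_entry_eq_one (T : SRCT α) {r c : ℕ} (hcell : IsCell α r c)
    (hone : T.entry r c = 1) (hc : 0 < c) : Removable α r c := by
  have hlast : c + 1 = α.getD r 0 := by
    by_contra hne
    have hnext : IsCell α r (c + 1) := ⟨hcell.1, by have := hcell.2; omega⟩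
    have := T.row_dec r c hnext
    have := T.one_le r (c + 1) hnext
    omega
  refine ⟨hcell, hlast, ?_⟩
  rcases Nat.eq_zero_or_pos r with hr | hr
  · exact Or.inl hr
  refine Or.inr ⟨by omega, fun i hi hlen => ?_⟩
  -- a row `i` above of length `c` would violate the triple rule at `(i, c - 1)`, `(r, c)`
  have hc1 : c - 1 + 1 = c := by omega
  have hleft : IsCell α i (c - 1) := ⟨hi.trans hcell.1, by omega⟩
  have hleft_ne : T.entry i (c - 1) ≠ 1 := fun he =>
    absurd (T.inj _ _ _ _ hleft hcell (he.trans hone.symm)).2 (by omega)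
  have hlt : T.entry r (c - 1 + 1) < T.entry i (c - 1) := by
    rw [hc1, hone]; have := T.one_le _ _ hleft; omega
  have := (T.triple i r (c - 1) hi hleft (hc1 ▸ hcell) hlt).1.2
  omega

end SRCT

namespace IsSink

variable {α : List ℕ} {T : SRCT α}

theorem le_col_of_succ (hsink : IsSink α T) {r' c' : ℕ} (hrem : Removable α r' c')
    (hmin : MinInCol α T r' c') {r c r₂ c₂ : ℕ} (hcell : IsCell α r c) (hcell₂ : IsCell α r₂ c₂)
    (hsucc : T.entry r₂ c₂ = T.entry r c + 1) (hle : T.entry r₂ c₂ ≤ T.entry r' c')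
    (hc₂ : c' ≤ c₂) : c' ≤ c := by
  by_contra! hcc
  obtain ⟨a, b, a₂, b₂, ha, ha₂, hea, hea₂, hatt⟩ :=
    hsink _ ⟨r, c, r₂, c₂, hcell, hcell₂, rfl, hsucc, by omega⟩
  obtain ⟨rfl, rfl⟩ := T.inj _ _ _ _ ha hcell hea
  obtain ⟨rfl, rfl⟩ := T.inj _ _ _ _ ha₂ hcell₂ (hea₂.trans hsucc.symm)
  -- the descent at `T.entry r c` is attacking, so its successor sits in column `c' = c + 1`, below it
  obtain ⟨rfl, hrow⟩ : b₂ = b + 1 ∧ a < a₂ := by omega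
  obtain rfl : c' = b + 1 := by omega
  obtain ⟨rfl, -⟩ := T.inj _ _ _ _ hcell₂ hrem.1 (le_antisymm hle (hmin a₂ hcell₂))
  rcases hrem.2.2 with h0 | ⟨-, hnot⟩
  · omega
  -- row `a` is not of length `c'`, so it reaches column `c'`, where its entry is smaller still
  have hlen := hnot a hrow
  have := hrem.2.1
  have hright : IsCell α a (b + 1) := ⟨hcell.1, by have := hcell.2; omega⟩
  have := T.row_dec a b hright
  have := hmin a hright
  omega

theorem le_col_of_entry_le (hsink : IsSink α T) {r' c' : ℕ} (hrem : Removable α r' c')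
    (hmin : MinInCol α T r' c') {r c : ℕ} (hcell : IsCell α r c)
    (hle : T.entry r c ≤ T.entry r' c') : c' ≤ c := by
  obtain ⟨d, hd⟩ := Nat.exists_eq_add_of_le hle
  induction d generalizing r c with
  | zero => exact (T.inj _ _ _ _ hcell hrem.1 (by omega)).2.ge
  | succ d ih =>
    have hsucc_le : T.entry r c + 1 ≤ α.sum := by have := T.le_sum _ _ hrem.1; omega
    obtain ⟨r₂, c₂, hcell₂, he₂⟩ := T.surj _ (by omega) hsucc_le
    exact hsink.le_col_of_succ hrem hmin hcell hcell₂ he₂ (by omega)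
      (ih hcell₂ (by omega) (by omega))

end IsSink

theorem sink_one_in_greatest_DRN_column_general (α : List ℕ)
    (T Tsink : SRCT α) (hcl : Tsink ∈ stClass α T)
    (hsink : IsSink α Tsink) (M : ℕ) (hM : IsGreatest (DRN α T) M) :
    ∃ r, Removable α r M ∧ MinInCol α Tsink r M ∧ Tsink.entry r M = 1 := by
  obtain ⟨r', hrem, hminT⟩ := hM.1
  have hminS : MinInCol α Tsink r' M := SRCT.minInCol_of_stWord_eq hcl.symm hrem.1 hminT
  obtain ⟨r₁, c₁, hcell₁, hone⟩ :=
    Tsink.surj 1 le_rfl ((Tsink.one_le _ _ hrem.1).trans (Tsink.le_sum _ _ hrem.1))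
  have hM_le : M ≤ c₁ :=
    hsink.le_col_of_entry_le hrem hminS hcell₁ (hone ▸ Tsink.one_le _ _ hrem.1)
  have hle_M : c₁ ≤ M := by
    rcases Nat.eq_zero_or_pos c₁ with h0 | hpos
    · omega
    have hmin₁ : MinInCol α Tsink r₁ c₁ := fun s hs => hone ▸ Tsink.one_le _ _ hs
    exact hM.2 ⟨r₁, Tsink.removable_of_entry_eq_one hcell₁ hone hpos,
      SRCT.minInCol_of_stWord_eq hcl hcell₁ hmin₁⟩
  obtain rfl : c₁ = M := le_antisymm hle_M hM_le
  exact ⟨r', hrem, hminS, le_antisymm (hone ▸ hminS r₁ hcell₁) (Tsink.one_le _ _ hrem.1)⟩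

/-- In a sink tableau of an equivalence class `E`, the distinguished removable node in the
largest column of `DRN(α,E)` contains the entry `1`. -/
theorem sink_one_in_greatest_DRN_column (n : ℕ) (α : List ℕ) (hpos : ∀ a ∈ α, 0 < a)
    (hsum : α.sum = n) (T Tsink : SRCT α) (hcl : Tsink ∈ stClass α T)
    (hsink : IsSink α Tsink) (M : ℕ) (hM : IsGreatest (DRN α T) M) :
    ∃ r, Removable α r M ∧ MinInCol α Tsink r M ∧ Tsink.entry r M = 1 :=
  sink_one_in_greatest_DRN_column_general α T Tsink hcl hsink M hM
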